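/- arXiv:1405.5304 — 3 statements merged into one kernel-verified Lean document; each statement's English description precedes it below -/
import Mathlib

section
/- Assume h0 = h + k² ≥ 0 in the quadratic form sense, i.e. (h0 u | u) ≥ 0 for all u ∈ D(h), and assume there are constants 0 ≤ α < 1 and β ≥ 0 such that ‖k u‖² ≤ α (h0 u | u) + β ‖u‖² for all u ∈ D(h). Then: (i) h is bounded from below, namely (h u | u) ≥ −β ‖u‖² for all u ∈ D(h); and (ii) for every b > 1 and every z ∈ ℂ with Im z ≠ 0 such that p(z): D(h) → H is bijective with bounded inverse and |z|² ≥ b β / (b − 1), setting v := p(z)^{-1} u for u ∈ H, one has (1 − α)(h0 v | v) ≤ ( β b² / (|z|² (Im z)²) + b / (Im z)² ) ‖u‖². -/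
open Complex

noncomputable section

variable {H : Type*} [NormedAddCommGroup H] [InnerProductSpace ℂ H] [CompleteSpace H]

/-- The quadratic pencil `p(z) = h + z(2k - z) = h + 2z k - z²` acting on the domain of `h`. -/
def pencil (h : H →ₗ.[ℂ] H) (k : H →L[ℂ] H) (z : ℂ) : h.domain →ₗ[ℂ] H :=
  h.toFun + (2 * z) • (k.toLinearMap.comp h.domain.subtype) - z ^ 2 • h.domain.subtype

/-- `p(z) : D(h) → H` is bijective with bounded inverse. -/
def PencilBijBdd (h : H →ₗ.[ℂ] H) (k : H →L[ℂ] H) (z : ℂ) : Prop :=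
  Function.Bijective (pencil h k z) ∧
    ∃ C : ℝ, ∀ v : h.domain, ‖(v : H)‖ ≤ C * ‖pencil h k z v‖

/-- The quadratic form `(h₀ u | u)` of `h₀ = h + k²` on the domain of `h`. -/
def h0Form (h : H →ₗ.[ℂ] H) (k : H →L[ℂ] H) (u : h.domain) : ℝ :=
  (inner ℂ (h u + k (k (u : H))) (u : H) : ℂ).re

/-! Write `t = (h v | v)` and `s = (k v | v)`, both real. Expanding the pencil,
`(p(z) v | v) = t + 2 z̄ s - z̄² ‖v‖²`, so multiplying by `z` makes the `k`-term real:
`Im (z (p(z) v | v)) = Im z · (t + |z|² ‖v‖²)`. Cauchy–Schwarz bounds this by `|z| ‖u‖ ‖v‖`,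
while the form bound gives `(1 - α)(h₀ v | v) ≤ t + β ‖v‖²`; the condition `|z|² ≥ bβ/(b - 1)`,
i.e. `|z|² ≤ b (|z|² - β)`, turns these two facts into the estimate by real arithmetic. -/

theorem IsSelfAdjoint.im_inner_apply_self {𝕜 E : Type*} [RCLike 𝕜]
    [NormedAddCommGroup E] [InnerProductSpace 𝕜 E] [CompleteSpace E]
    {A : E →ₗ.[𝕜] E} (hA : IsSelfAdjoint A) (x : A.domain) :
    RCLike.im (inner 𝕜 (A x) (x : E)) = 0 := by
  have hsymm : A.IsFormalAdjoint A := by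
    have h := LinearPMap.adjoint_isFormalAdjoint hA.dense_domain
    rwa [LinearPMap.isSelfAdjoint_def.mp hA] at h
  exact RCLike.conj_eq_iff_im.mp (by rw [inner_conj_symm, hsymm])

theorem h0Form_eq_re_inner_add_norm_sq (h : H →ₗ.[ℂ] H) {k : H →L[ℂ] H} (hk : IsSelfAdjoint k)
    (u : h.domain) :
    h0Form h k u = (inner ℂ (h u) (u : H)).re + ‖k (u : H)‖ ^ 2 := by
  rw [h0Form, inner_add_left, hk.isSymmetric.apply_clm, inner_self_eq_norm_sq_to_K]
  norm_cast

theorem one_sub_mul_h0Form_le (h : H →ₗ.[ℂ] H) {k : H →L[ℂ] H} (hk : IsSelfAdjoint k)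
    {α β : ℝ} (hkbound : ∀ u : h.domain, ‖k (u : H)‖ ^ 2 ≤ α * h0Form h k u + β * ‖(u : H)‖ ^ 2)
    (u : h.domain) :
    (1 - α) * h0Form h k u ≤ (inner ℂ (h u) (u : H)).re + β * ‖(u : H)‖ ^ 2 := by
  linarith [h0Form_eq_re_inner_add_norm_sq h hk u, hkbound u]

open ComplexConjugate in
theorem inner_pencil_apply_self {E : Type*} [NormedAddCommGroup E] [InnerProductSpace ℂ E]
    (h : E →ₗ.[ℂ] E) (k : E →L[ℂ] E) (z : ℂ) (v : h.domain) :
    inner ℂ (pencil h k z v) (v : E) =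
      inner ℂ (h v) (v : E) + 2 * conj z * inner ℂ (k v) (v : E) - conj z ^ 2 * ‖(v : E)‖ ^ 2 := by
  simp only [pencil, LinearMap.sub_apply, LinearMap.add_apply, LinearMap.smul_apply,
    LinearPMap.toFun_eq_coe, LinearMap.comp_apply, ContinuousLinearMap.coe_coe,
    Submodule.subtype_apply, inner_sub_left, inner_add_left, inner_smul_left,
    inner_self_eq_norm_sq_to_K, coe_algebraMap, map_mul, map_pow, map_ofNat]

theorem im_mul_inner_pencil_apply_self {h : H →ₗ.[ℂ] H} (hsa : IsSelfAdjoint h)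
    {k : H →L[ℂ] H} (hk : IsSelfAdjoint k) (z : ℂ) (v : h.domain) :
    (z * inner ℂ (pencil h k z v) (v : H)).im =
      z.im * ((inner ℂ (h v) (v : H)).re + ‖z‖ ^ 2 * ‖(v : H)‖ ^ 2) := by
  have ht := hsa.im_inner_apply_self v
  have hs := hk.isSymmetric.im_inner_apply_self (v : H)
  rw [inner_pencil_apply_self, Complex.sq_norm, Complex.normSq_apply]
  simp only [ContinuousLinearMap.coe_coe, RCLike.im_to_complex] at ht hs
  simp only [pow_two, mul_im, mul_re, sub_im, sub_re, add_im, add_re, conj_re, conj_im,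
    re_ofNat, im_ofNat, ofReal_re, ofReal_im, ht, hs]
  ring

theorem abs_im_mul_le_norm_pencil {h : H →ₗ.[ℂ] H} (hsa : IsSelfAdjoint h)
    {k : H →L[ℂ] H} (hk : IsSelfAdjoint k) (z : ℂ) (v : h.domain) :
    |z.im| * ((inner ℂ (h v) (v : H)).re + ‖z‖ ^ 2 * ‖(v : H)‖ ^ 2) ≤
      ‖z‖ * ‖pencil h k z v‖ * ‖(v : H)‖ := calc
  _ ≤ |z.im * ((inner ℂ (h v) (v : H)).re + ‖z‖ ^ 2 * ‖(v : H)‖ ^ 2)| := by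
      rw [abs_mul]; exact mul_le_mul_of_nonneg_left (le_abs_self _) (abs_nonneg _)
  _ = |(z * inner ℂ (pencil h k z v) (v : H)).im| := by
      rw [im_mul_inner_pencil_apply_self hsa hk]
  _ ≤ ‖z‖ * ‖inner ℂ (pencil h k z v) (v : H)‖ := by
      rw [← norm_mul]; exact abs_im_le_norm _
  _ ≤ ‖z‖ * ‖pencil h k z v‖ * ‖(v : H)‖ := by
      rw [mul_assoc]; gcongr; exact norm_inner_le_norm _ _

theorem pencil_estimate_of_abs_im_mul_le {β b t p n U Z Y : ℝ} (hβ : 0 ≤ β) (hb : 1 < b)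
    (hY : 0 < Y) (hZ : 0 < Z) (hn : 0 ≤ n) (hU : 0 ≤ U) (hp : 0 ≤ p) (hsplit : p ≤ t + β * n ^ 2)
    (hE : Y * (t + Z ^ 2 * n ^ 2) ≤ Z * U * n) (hzb : b * β / (b - 1) ≤ Z ^ 2) :
    p ≤ (β * b ^ 2 / (Z ^ 2 * Y ^ 2) + b / Y ^ 2) * U ^ 2 := by
  set T := t + Z ^ 2 * n ^ 2
  have hZ_le : Z ^ 2 ≤ b * (Z ^ 2 - β) := by
    have := (div_le_iff₀ (by linarith : (0 : ℝ) < b - 1)).mp hzb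
    linarith
  have hZn : Z ^ 2 * n ^ 2 ≤ b * T := calc
    Z ^ 2 * n ^ 2 ≤ b * (Z ^ 2 - β) * n ^ 2 := by gcongr
    _ ≤ b * T := by rw [mul_assoc]; gcongr; linarith
  have hZYn : Z * Y * n ≤ b * U := by
    rcases hn.eq_or_lt with rfl | hn
    · simp only [mul_zero]; positivity
    refine le_of_mul_le_mul_right ?_ (mul_pos hZ hn)
    calc Z * Y * n * (Z * n) = Y * (Z ^ 2 * n ^ 2) := by ring
      _ ≤ Y * (b * T) := by gcongr
      _ = b * (Y * T) := by ring
      _ ≤ b * (Z * U * n) := by gcongr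
      _ = b * U * (Z * n) := by ring
  have hTY : T * Y ^ 2 ≤ b * U ^ 2 := calc
    T * Y ^ 2 = Y * T * Y := by ring
    _ ≤ Z * U * n * Y := by gcongr
    _ = U * (Z * Y * n) := by ring
    _ ≤ U * (b * U) := by gcongr
    _ = b * U ^ 2 := by ring
  have hβn : β * n ^ 2 ≤ β * b ^ 2 * U ^ 2 / (Z ^ 2 * Y ^ 2) := by
    rw [le_div_iff₀ (by positivity)]
    calc β * n ^ 2 * (Z ^ 2 * Y ^ 2) = β * (Z * Y * n) ^ 2 := by ring
      _ ≤ β * (b * U) ^ 2 := by gcongr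
      _ = β * b ^ 2 * U ^ 2 := by ring
  calc p ≤ T + β * n ^ 2 := by linarith [sq_nonneg (Z * n)]
    _ ≤ b * U ^ 2 / Y ^ 2 + β * b ^ 2 * U ^ 2 / (Z ^ 2 * Y ^ 2) := by
        gcongr; rwa [le_div_iff₀ (by positivity)]
    _ = (β * b ^ 2 / (Z ^ 2 * Y ^ 2) + b / Y ^ 2) * U ^ 2 := by ring

theorem pencil_h0_inverse_estimate_general
    (h : H →ₗ.[ℂ] H) (hsa : IsSelfAdjoint h)
    (k : H →L[ℂ] H) (hk : IsSelfAdjoint k)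
    (hpos : ∀ u : h.domain, 0 ≤ h0Form h k u)
    (α β : ℝ) (hα1 : α < 1) (hβ : 0 ≤ β)
    (hkbound : ∀ u : h.domain, ‖k (u : H)‖ ^ 2 ≤ α * h0Form h k u + β * ‖(u : H)‖ ^ 2) :
    (∀ u : h.domain, -β * ‖(u : H)‖ ^ 2 ≤ (inner ℂ (h u) (u : H) : ℂ).re) ∧
    (∀ b : ℝ, 1 < b → ∀ z : ℂ, z.im ≠ 0 → PencilBijBdd h k z →
      b * β / (b - 1) ≤ ‖z‖ ^ 2 →
      ∀ (u : H) (v : h.domain), pencil h k z v = u →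
        (1 - α) * h0Form h k v
          ≤ (β * b ^ 2 / (‖z‖ ^ 2 * z.im ^ 2) + b / z.im ^ 2) * ‖u‖ ^ 2) := by
  have hform_nonneg (u : h.domain) : 0 ≤ (1 - α) * h0Form h k u :=
    mul_nonneg (sub_nonneg.mpr hα1.le) (hpos u)
  refine ⟨fun u => ?_, fun b hb z hz _ hzb u v hv => ?_⟩
  · linarith [one_sub_mul_h0Form_le h hk hkbound u, hform_nonneg u]
  · subst hv
    rw [← sq_abs z.im]
    exact pencil_estimate_of_abs_im_mul_le hβ hb (abs_pos.mpr hz)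
      (norm_pos_iff.mpr (by rintro rfl; simp at hz)) (norm_nonneg _) (norm_nonneg _)
      (hform_nonneg v) (one_sub_mul_h0Form_le h hk hkbound v)
      (abs_im_mul_le_norm_pencil hsa hk z v) hzb

/-- If `h₀ ≥ 0` and `‖ku‖² ≤ α (h₀u|u) + β‖u‖²` with `α < 1`, then `h ≥ -β`
and one has the weighted resolvent estimate
`(1-α)(h₀ p(z)⁻¹u | p(z)⁻¹u) ≤ (βb²/(|z|²(Im z)²) + b/(Im z)²)‖u‖²`. -/
theorem pencil_h0_inverse_estimate
    (h : H →ₗ.[ℂ] H) (hsa : IsSelfAdjoint h)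
    (k : H →L[ℂ] H) (hk : IsSelfAdjoint k)
    (hpos : ∀ u : h.domain, 0 ≤ h0Form h k u)
    (α β : ℝ) (hα0 : 0 ≤ α) (hα1 : α < 1) (hβ : 0 ≤ β)
    (hkbound : ∀ u : h.domain, ‖k (u : H)‖ ^ 2 ≤ α * h0Form h k u + β * ‖(u : H)‖ ^ 2) :
    (∀ u : h.domain, -β * ‖(u : H)‖ ^ 2 ≤ (inner ℂ (h u) (u : H) : ℂ).re) ∧
    (∀ b : ℝ, 1 < b → ∀ z : ℂ, z.im ≠ 0 → PencilBijBdd h k z →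
      b * β / (b - 1) ≤ ‖z‖ ^ 2 →
      ∀ (u : H) (v : h.domain), pencil h k z v = u →
        (1 - α) * h0Form h k v
          ≤ (β * b ^ 2 / (‖z‖ ^ 2 * z.im ^ 2) + b / z.im ^ 2) * ‖u‖ ^ 2) :=
  pencil_h0_inverse_estimate_general h hsa k hk hpos α β hα1 hβ hkbound
end
end

section
/- Assume (h0 u | u) ≥ 0 for all u ∈ D(h). Let z ∈ ℂ with Im z ≠ 0 be such that p(z): D(h) → H is bijective with bounded inverse, set m := z − k (boundedly invertible), and suppose there are constants a ≥ 0 and 0 ≤ b < 1 such that for all w, v ∈ D(h): |( w | z · m^{-1}(h0 v) )| ≤ a · (h0 w | w)^{1/2} (h0 v | v)^{1/2}, and 2 |( v | k · m^{-1}(h0 v) )| ≤ b · (h0 v | v). Then for every u ∈ D(h), setting v := p(z)^{-1}( (z − k) u ) ∈ D(h), one has (1 − b) · (h0 v | v)^{1/2} ≤ (a / |Im z|) · (h0 u | u)^{1/2}. -/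
/-! With `m = z - k` and `y = m⁻¹ h₀ v`, the pencil equation says `y = u + m v`, and
`(v | m y) = (h₀ v | v)` is real. Expanding `(u | z y)` then gives
`Im (u | z y) = Im z · (‖y‖² + (h₀ v | v) + 2 Re (v | k y))`: the bound on `k m⁻¹` makes the bracket
at least `(1 - b) (h₀ v | v)`, and the bound on `z m⁻¹` bounds the left side by
`a (h₀ u | u)^{1/2} (h₀ v | v)^{1/2}`. -/

open Complex

noncomputable section

variable {H : Type*} [NormedAddCommGroup H] [InnerProductSpace ℂ H] [CompleteSpace H]

theorem LinearPMap.isFormalAdjoint_self_of_isSelfAdjoint {E : Type*} [NormedAddCommGroup E]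
    [InnerProductSpace ℂ E] [CompleteSpace E] {A : E →ₗ.[ℂ] E} (hA : IsSelfAdjoint A) :
    A.IsFormalAdjoint A := by
  have hfa := LinearPMap.adjoint_isFormalAdjoint hA.dense_domain (T := A)
  rwa [show A.adjoint = A from hA] at hfa

section Pencil

variable {E : Type*} [NormedAddCommGroup E] [InnerProductSpace ℂ E]
  {h : E →ₗ.[ℂ] E} {k : E →L[ℂ] E}

theorem pencil_apply (z : ℂ) (v : h.domain) :
    pencil h k z v = h v + (2 * z) • k v - z ^ 2 • (v : E) := rfl

theorem inner_h0_self_eq_h0Form (hh : h.IsFormalAdjoint h) (hk : (k : E →ₗ[ℂ] E).IsSymmetric)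
    (v : h.domain) : inner ℂ (v : E) (h v + k (k (v : E))) = (h0Form h k v : ℂ) := by
  have hreal : inner ℂ (h v + k (k (v : E))) (v : E) = inner ℂ (v : E) (h v + k (k (v : E))) := by
    simp only [inner_add_left, inner_add_right, hh v v, hk.apply_clm]
  rw [h0Form, hreal]
  exact (Complex.conj_eq_iff_re.mp (by rw [inner_conj_symm, hreal])).symm

/-- With `m = z - k`: `m (u + m v) = m u + m² v = p(z) v + m² v = h₀ v`. -/
theorem minv_h0_eq_of_pencil_eq {z : ℂ} {minv : E →L[ℂ] E}
    (hminv : ∀ x : E, minv (z • x - k x) = x) {u v : h.domain}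
    (hv : pencil h k z v = z • (u : E) - k (u : E)) :
    minv (h v + k (k (v : E))) = u + z • (v : E) - k v := by
  rw [pencil_apply] at hv
  have hhv : h v = z • (u : E) - k u - (2 * z) • k v + z ^ 2 • (v : E) := by
    rw [← hv]; abel
  convert hminv ((u : E) + z • (v : E) - k v) using 2
  rw [hhv]
  simp only [map_add, map_smul, map_sub]
  module

end Pencil

/-- Expanding `u = y - (z - k) v` gives `(u | z y) = z ‖y‖² - z̄ (Q + B) + z B` with
`B = (v | k y)`. -/
theorem im_inner_smul_eq_of_eq_add_sub {E : Type*} [NormedAddCommGroup E] [InnerProductSpace ℂ E]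
    {k : E →L[ℂ] E} (hk : (k : E →ₗ[ℂ] E).IsSymmetric) {z : ℂ} {u v y : E} {Q : ℝ}
    (hy : y = u + z • v - k v) (hQ : inner ℂ v (z • y - k y) = (Q : ℂ)) :
    (inner ℂ u (z • y)).im = z.im * (‖y‖ ^ 2 + Q + 2 * (inner ℂ v (k y)).re) := by
  have hu : u = y - z • v + k v := by rw [hy]; abel
  have hzc : z * inner ℂ v y = Q + inner ℂ v (k y) := by
    rw [inner_sub_right, inner_smul_right] at hQ
    linear_combination hQ
  have hW : inner ℂ u (z • y) =
      z * (‖y‖ ^ 2 : ℝ) - (starRingEnd ℂ) z * (Q + inner ℂ v (k y)) + z * inner ℂ v (k y) := by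
    rw [← hzc, hu, inner_smul_right, inner_add_left, inner_sub_left, inner_smul_left,
      hk.apply_clm, inner_self_eq_norm_sq_to_K, RCLike.ofReal_eq_complex_ofReal]
    push_cast
    ring
  rw [hW]
  simp only [Complex.add_im, Complex.sub_im, Complex.mul_im, Complex.conj_re, Complex.conj_im,
    Complex.ofReal_re, Complex.ofReal_im, Complex.add_re]
  ring

theorem mul_sqrt_le_div_of_mul_le {c A β Q : ℝ} (hc : 0 < c) (hA : 0 ≤ A)
    (h : c * (β * Q) ≤ A * √Q) : β * √Q ≤ A / c := by
  rcases le_or_gt Q 0 with hQ | hQ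
  · rw [Real.sqrt_eq_zero'.mpr hQ, mul_zero]
    positivity
  · have hsQ : 0 < √Q := Real.sqrt_pos.mpr hQ
    rw [le_div_iff₀ hc]
    refine le_of_mul_le_mul_right ?_ hsQ
    calc β * √Q * c * √Q = c * (β * (√Q * √Q)) := by ring
      _ = c * (β * Q) := by rw [Real.mul_self_sqrt hQ.le]
      _ ≤ A * √Q := h

theorem pencil_homogeneous_estimate_general
    (h : H →ₗ.[ℂ] H) (hsa : IsSelfAdjoint h)
    (k : H →L[ℂ] H) (hk : IsSelfAdjoint k)
    (z : ℂ) (hz : z.im ≠ 0)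
    (minv : H →L[ℂ] H)
    (hminv : ∀ x : H, minv (z • x - k x) = x ∧ z • minv x - k (minv x) = x)
    (a b : ℝ) (ha : 0 ≤ a)
    (hbound₁ : ∀ w v : h.domain,
      ‖(inner ℂ (w : H) (z • minv (h v + k (k (v : H)))) : ℂ)‖
        ≤ a * Real.sqrt (h0Form h k w) * Real.sqrt (h0Form h k v))
    (hbound₂ : ∀ v : h.domain,
      2 * ‖(inner ℂ (v : H) (k (minv (h v + k (k (v : H))))) : ℂ)‖ ≤ b * h0Form h k v) :
    ∀ u v : h.domain, pencil h k z v = z • (u : H) - k (u : H) →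
      (1 - b) * Real.sqrt (h0Form h k v)
        ≤ a / |z.im| * Real.sqrt (h0Form h k u) := by
  intro u v hv
  set y := minv (h v + k (k (v : H)))
  set B : ℂ := inner ℂ (v : H) (k y)
  have hy : y = u + z • (v : H) - k v := minv_h0_eq_of_pencil_eq (fun x ↦ (hminv x).1) hv
  have hQ : inner ℂ (v : H) (z • y - k y) = (h0Form h k v : ℂ) := by
    rw [(hminv _).2, inner_h0_self_eq_h0Form (LinearPMap.isFormalAdjoint_self_of_isSelfAdjoint hsa)
      hk.isSymmetric]
  have him := im_inner_smul_eq_of_eq_add_sub hk.isSymmetric hy hQ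
  have hB : (1 - b) * h0Form h k v ≤ ‖y‖ ^ 2 + h0Form h k v + 2 * B.re := by
    have := hbound₂ v
    nlinarith [neg_abs_le B.re, Complex.abs_re_le_norm B, sq_nonneg ‖y‖]
  rw [div_mul_eq_mul_div, mul_comm a]
  refine mul_sqrt_le_div_of_mul_le (abs_pos.mpr hz) (by positivity) ?_
  calc |z.im| * ((1 - b) * h0Form h k v)
      ≤ |z.im| * |‖y‖ ^ 2 + h0Form h k v + 2 * B.re| := by gcongr; exact hB.trans (le_abs_self _)
    _ = |(inner ℂ (u : H) (z • y)).im| := by rw [him, abs_mul]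
    _ ≤ ‖inner ℂ (u : H) (z • y)‖ := Complex.abs_im_le_norm _
    _ ≤ √(h0Form h k u) * a * √(h0Form h k v) := by rw [mul_comm _ a]; exact hbound₁ u v

/-- Under the stated bounds on `z m⁻¹` and `k m⁻¹` on the homogeneous scale,
`v := p(z)⁻¹((z-k)u)` satisfies `(1-b)(h₀v|v)^{1/2} ≤ (a/|Im z|)(h₀u|u)^{1/2}`. -/
theorem pencil_homogeneous_estimate
    (h : H →ₗ.[ℂ] H) (hsa : IsSelfAdjoint h)
    (k : H →L[ℂ] H) (hk : IsSelfAdjoint k)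
    (hpos : ∀ u : h.domain, 0 ≤ h0Form h k u)
    (z : ℂ) (hz : z.im ≠ 0) (hbij : PencilBijBdd h k z)
    (minv : H →L[ℂ] H)
    (hminv : ∀ x : H, minv (z • x - k x) = x ∧ z • minv x - k (minv x) = x)
    (a b : ℝ) (ha : 0 ≤ a) (hb0 : 0 ≤ b) (hb1 : b < 1)
    (hbound₁ : ∀ w v : h.domain,
      ‖(inner ℂ (w : H) (z • minv (h v + k (k (v : H)))) : ℂ)‖
        ≤ a * Real.sqrt (h0Form h k w) * Real.sqrt (h0Form h k v))
    (hbound₂ : ∀ v : h.domain,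
      2 * ‖(inner ℂ (v : H) (k (minv (h v + k (k (v : H))))) : ℂ)‖ ≤ b * h0Form h k v) :
    ∀ u v : h.domain, pencil h k z v = z • (u : H) - k (u : H) →
      (1 - b) * Real.sqrt (h0Form h k v)
        ≤ a / |z.im| * Real.sqrt (h0Form h k u) :=
  pencil_homogeneous_estimate_general h hsa k hk z hz minv hminv a b ha hbound₁ hbound₂
end
end

section
/- Assume (h0 v | v) ≥ 0 for all v ∈ D(h), and suppose there is a constant C ≥ 0 such that 2 |Im( ( k v | h v ) )| ≤ C (h0 v | v) for all v ∈ D(h) (a form bound on the commutator [ik,h] by h0). Let u : ℝ → H be twice continuously differentiable with u(t) ∈ D(h) for all t, solving u''(t) = 2 i k u'(t) − h u(t). Then the homogeneous energy E(t) := ‖u'(t) − i k u(t)‖² + (h0 u(t) | u(t)) satisfies E(t) ≤ e^{C|t|} E(0) for all t ∈ ℝ. (This is the exponential bound underlying the generation of the C₀-group on the homogeneous energy space.) -/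
/-! Along a solution `E' = 2 Im (k u | h u)`: differentiating `‖u' - iku‖²` and `(h₀ u | u)`, all
other terms cancel by the equation and the symmetry of `k`. The term `(h u | u)` is differentiable
even though `h u` need not be: symmetry of `h` turns its difference quotient at `t` into
`Re (h u(s) + h u(t) | (u(s) - u(t)) / (s - t))`, and `h u = 2ik u' - u''` is continuous. The
hypothesis then gives `|E'| ≤ C (h₀ u | u) ≤ C E`, and Grönwall's argument, run forward and backward
in time, yields `E(t) ≤ e^{C|t|} E(0)`. -/

open Complex

noncomputable section

variable {H : Type*} [NormedAddCommGroup H] [InnerProductSpace ℂ H] [CompleteSpace H]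

theorem le_exp_mul_mul_of_hasDerivAt_le_mul {f f' : ℝ → ℝ} {C : ℝ}
    (hf : ∀ t, HasDerivAt f (f' t) t) (hbound : ∀ t, f' t ≤ C * f t) {t : ℝ} (ht : 0 ≤ t) :
    f t ≤ Real.exp (C * t) * f 0 := by
  have hanti : Antitone fun s => Real.exp (-C * s) * f s := by
    refine antitone_of_hasDerivAt_nonpos
      (f' := fun s => Real.exp (-C * s) * (f' s - C * f s)) (fun s => ?_) (fun s => ?_)
    · exact (((hasDerivAt_id' s).const_mul (-C)).exp.mul (hf s)).congr_deriv (by ring)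
    · exact mul_nonpos_of_nonneg_of_nonpos (Real.exp_pos _).le (sub_nonpos.2 (hbound s))
  have hdecay : Real.exp (-C * t) * f t ≤ f 0 := by simpa using hanti ht
  calc f t = Real.exp (C * t) * (Real.exp (-C * t) * f t) := by
        rw [← mul_assoc, ← Real.exp_add, neg_mul, add_neg_cancel, Real.exp_zero, one_mul]
    _ ≤ Real.exp (C * t) * f 0 := mul_le_mul_of_nonneg_left hdecay (Real.exp_pos _).le

theorem le_exp_mul_abs_mul_of_abs_hasDerivAt_le_mul {f f' : ℝ → ℝ} {C : ℝ}
    (hf : ∀ t, HasDerivAt f (f' t) t) (hbound : ∀ t, |f' t| ≤ C * f t) (t : ℝ) :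
    f t ≤ Real.exp (C * |t|) * f 0 := by
  rcases le_or_gt 0 t with ht | ht
  · rw [abs_of_nonneg ht]
    exact le_exp_mul_mul_of_hasDerivAt_le_mul hf (fun s => (le_abs_self _).trans (hbound s)) ht
  · have hrev : ∀ s, HasDerivAt (fun r => f (-r)) (-f' (-s)) s := fun s =>
      ((hf (-s)).comp s (hasDerivAt_neg s)).congr_deriv (by ring)
    have := le_exp_mul_mul_of_hasDerivAt_le_mul hrev
      (fun s => (neg_le_abs _).trans (hbound (-s))) (neg_nonneg.2 ht.le)
    rw [abs_of_neg ht]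
    simpa using this

section InnerProductSpace

variable {E : Type*} [NormedAddCommGroup E] [InnerProductSpace ℂ E]

local notation "⟪" x ", " y "⟫" => inner ℂ x y

theorem HasDerivAt.norm_sq_of_complex {v : ℝ → E} {v' : E} {t : ℝ} (hv : HasDerivAt v v' t) :
    HasDerivAt (fun s => ‖v s‖ ^ 2) (2 * re ⟪v t, v'⟫) t := by
  let _ := InnerProductSpace.complexToReal (G := E)
  exact hv.norm_sq

theorem LinearPMap.IsFormalAdjoint.hasDerivAt_re_inner_apply_self {A : E →ₗ.[ℂ] E}
    (hA : A.IsFormalAdjoint A) {U : ℝ → A.domain} {u' : E} {t : ℝ}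
    (hU : HasDerivAt (fun s => (U s : E)) u' t) (hAU : ContinuousAt (fun s => A (U s)) t) :
    HasDerivAt (fun s => re ⟪A (U s), (U s : E)⟫) (2 * re ⟪A (U t), u'⟫) t := by
  have hcross : ∀ s, re ⟪A (U s), (U t : E)⟫ = re ⟪A (U t), (U s : E)⟫ := fun s => by
    rw [hA (U s) (U t), ← inner_conj_symm, Complex.conj_re]
  have hslope : slope (fun s => re ⟪A (U s), (U s : E)⟫) t =
      fun s => re ⟪A (U s) + A (U t), slope (fun s => (U s : E)) t s⟫ := by
    funext s
    rw [slope_def_field, slope_def_module, ← Complex.coe_smul, inner_smul_right]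
    simp only [inner_add_left, inner_sub_right, Complex.mul_re, ofReal_re, ofReal_im,
      Complex.add_re, Complex.sub_re, hcross s]
    ring
  rw [hasDerivAt_iff_tendsto_slope, hslope, two_mul, ← Complex.add_re, ← inner_add_left]
  exact (Complex.continuous_re.tendsto _).comp <|
    ((hAU.tendsto.mono_left nhdsWithin_le_nhds).add tendsto_const_nhds).inner (𝕜 := ℂ)
      hU.tendsto_slope

theorem LinearMap.IsSymmetric.re_inner_energy_flux {k : E →L[ℂ] E}
    (hk : (k : E →ₗ[ℂ] E).IsSymmetric) (x w g : E) :
    re ⟪w - I • k x, I • k w - g⟫ + re ⟪k x, k w⟫ + re ⟪g, w⟫ = im ⟪k x, g⟫ := by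
  have hw : im ⟪w, k w⟫ = 0 := hk.im_inner_self_apply w
  have hg : re ⟪g, w⟫ = re ⟪w, g⟫ := by rw [← inner_conj_symm, conj_re]
  simp only [inner_sub_left, inner_sub_right, inner_smul_left, inner_smul_right, conj_I,
    Complex.sub_re, Complex.sub_im, Complex.mul_re, Complex.mul_im, Complex.neg_re, Complex.neg_im,
    I_re, I_im]
  linarith

theorem h0Form_eq {h : E →ₗ.[ℂ] E} {k : E →L[ℂ] E} (hk : (k : E →ₗ[ℂ] E).IsSymmetric)
    (x : h.domain) : h0Form h k x = re ⟪h x, (x : E)⟫ + ‖k x‖ ^ 2 := by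
  have hkk : ⟪k (k x), (x : E)⟫ = ⟪k x, k x⟫ := hk (k x) x
  rw [h0Form, inner_add_left, Complex.add_re, hkk, inner_self_eq_norm_sq_to_K]
  norm_cast

def homogeneousEnergy (h : E →ₗ.[ℂ] E) (k : E →L[ℂ] E) (x : h.domain) (w : E) : ℝ :=
  ‖w - I • k x‖ ^ 2 + h0Form h k x

theorem h0Form_le_homogeneousEnergy (h : E →ₗ.[ℂ] E) (k : E →L[ℂ] E) (x : h.domain) (w : E) :
    h0Form h k x ≤ homogeneousEnergy h k x w :=
  le_add_of_nonneg_left (sq_nonneg _)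

theorem hasDerivAt_homogeneousEnergy {h : E →ₗ.[ℂ] E} (hh : h.IsFormalAdjoint h)
    {k : E →L[ℂ] E} (hk : (k : E →ₗ[ℂ] E).IsSymmetric) {U : ℝ → h.domain} {u' u'' : ℝ → E}
    {t : ℝ}
    (hU : HasDerivAt (fun s => (U s : E)) (u' t) t) (hu' : HasDerivAt u' (u'' t) t)
    (hhU : ContinuousAt (fun s => h (U s)) t) (hode : u'' t = (2 * I) • k (u' t) - h (U t)) :
    HasDerivAt (fun s => homogeneousEnergy h k (U s) (u' s))
      (2 * im ⟪k (U t), h (U t)⟫) t := by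
  have hkU : HasDerivAt (fun s => k (U s)) (k (u' t)) t :=
    (k.restrictScalars ℝ).hasFDerivAt.comp_hasDerivAt t hU
  have hv : HasDerivAt (fun s => u' s - I • k (U s)) (I • k (u' t) - h (U t)) t :=
    (hu'.sub (hkU.const_smul I)).congr_deriv (by rw [hode, two_mul, add_smul]; abel)
  have hsum := hv.norm_sq_of_complex.add
    ((hh.hasDerivAt_re_inner_apply_self hU hhU).add hkU.norm_sq_of_complex)
  have hflux := hk.re_inner_energy_flux (U t) (u' t) (h (U t))
  have henergy : (fun s => homogeneousEnergy h k (U s) (u' s)) =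
      fun s => ‖u' s - I • k (U s)‖ ^ 2 + (re ⟪h (U s), (U s : E)⟫ + ‖k (U s)‖ ^ 2) :=
    funext fun s => by rw [homogeneousEnergy, h0Form_eq hk]
  rw [henergy]
  exact hsum.congr_deriv (by linarith)

end InnerProductSpace

theorem IsSelfAdjoint.isFormalAdjoint {A : H →ₗ.[ℂ] H} (hA : IsSelfAdjoint A) :
    A.IsFormalAdjoint A := by
  simpa only [LinearPMap.isSelfAdjoint_def.mp hA] using
    LinearPMap.adjoint_isFormalAdjoint hA.dense_domain

theorem homogeneous_energy_exponential_bound_general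
    (h : H →ₗ.[ℂ] H) (hsa : IsSelfAdjoint h)
    (k : H →L[ℂ] H) (hk : IsSelfAdjoint k)
    (C : ℝ) (hC : 0 ≤ C)
    (hcomm : ∀ v : h.domain, 2 * |(inner ℂ (k (v : H)) (h v) : ℂ).im| ≤ C * h0Form h k v)
    (u : ℝ → H) (hreg : ContDiff ℝ 2 u)
    (hdom : ∀ t : ℝ, u t ∈ h.domain)
    (hode : ∀ t : ℝ,
      deriv (deriv u) t = (2 * Complex.I) • k (deriv u t) - h ⟨u t, hdom t⟩) :
    ∀ t : ℝ,
      ‖deriv u t - Complex.I • k (u t)‖ ^ 2 + h0Form h k ⟨u t, hdom t⟩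
        ≤ Real.exp (C * |t|) *
          (‖deriv u 0 - Complex.I • k (u 0)‖ ^ 2 + h0Form h k ⟨u 0, hdom 0⟩) := by
  have hu : ∀ t, HasDerivAt u (deriv u t) t := fun t =>
    (hreg.differentiable two_ne_zero t).hasDerivAt
  have hreg' : ContDiff ℝ 1 (deriv u) := hreg.deriv'
  have hu' : ∀ t, HasDerivAt (deriv u) (deriv (deriv u) t) t := fun t =>
    (hreg'.differentiable one_ne_zero t).hasDerivAt
  set U : ℝ → h.domain := fun t => ⟨u t, hdom t⟩
  have hhU : Continuous fun t => h (U t) := by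
    have hhU_eq : (fun t => h (U t)) = fun t => (2 * I) • k (deriv u t) - deriv (deriv u) t :=
      funext fun t => by rw [hode, sub_sub_cancel]
    have := hreg'.continuous
    have := hreg'.continuous_deriv le_rfl
    rw [hhU_eq]
    fun_prop
  have hE := fun t => hasDerivAt_homogeneousEnergy hsa.isFormalAdjoint hk.isSymmetric (hu t)
    (hu' t) hhU.continuousAt (hode t)
  have hbound (t : ℝ) :
      |2 * im (inner ℂ (k (U t)) (h (U t)))| ≤ C * homogeneousEnergy h k (U t) (deriv u t) :=
    calc |2 * im (inner ℂ (k (U t)) (h (U t)))|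
        _ = 2 * |im (inner ℂ (k (U t)) (h (U t)))| := by rw [abs_mul, abs_two]
        _ ≤ C * h0Form h k (U t) := hcomm (U t)
        _ ≤ C * homogeneousEnergy h k (U t) (deriv u t) :=
          mul_le_mul_of_nonneg_left (h0Form_le_homogeneousEnergy h k _ _) hC
  exact le_exp_mul_abs_mul_of_abs_hasDerivAt_le_mul hE hbound

/-- If `h₀ ≥ 0` and `2|Im (kv|hv)| ≤ C (h₀v|v)`, then the homogeneous energy
of a solution of `u'' = 2ik u' - h u` satisfies `E(t) ≤ e^{C|t|} E(0)`. -/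
theorem homogeneous_energy_exponential_bound
    (h : H →ₗ.[ℂ] H) (hsa : IsSelfAdjoint h)
    (k : H →L[ℂ] H) (hk : IsSelfAdjoint k)
    (hpos : ∀ v : h.domain, 0 ≤ h0Form h k v)
    (C : ℝ) (hC : 0 ≤ C)
    (hcomm : ∀ v : h.domain, 2 * |(inner ℂ (k (v : H)) (h v) : ℂ).im| ≤ C * h0Form h k v)
    (u : ℝ → H) (hreg : ContDiff ℝ 2 u)
    (hdom : ∀ t : ℝ, u t ∈ h.domain)
    (hode : ∀ t : ℝ,
      deriv (deriv u) t = (2 * Complex.I) • k (deriv u t) - h ⟨u t, hdom t⟩) :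
    ∀ t : ℝ,
      ‖deriv u t - Complex.I • k (u t)‖ ^ 2 + h0Form h k ⟨u t, hdom t⟩
        ≤ Real.exp (C * |t|) *
          (‖deriv u 0 - Complex.I • k (u 0)‖ ^ 2 + h0Form h k ⟨u 0, hdom 0⟩) :=
  homogeneous_energy_exponential_bound_general h hsa k hk C hC hcomm u hreg hdom hode

end
end
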